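/- The multiplicative group of positive real numbers H = (ℝ_{>0}, ×) is not a real affine algebraic variety: the ℝ-algebra of regular functions on H (rational functions p/q with q nonvanishing on ℝ_{>0}) is not a finitely generated ℝ-algebra. In particular, the rational functions 1/(x+a) for a > 0 are pairwise distinct elements, no finite subset of which generates them all over ℝ[x]. -/

import Mathlib

/-!
Write a regular function on `ℝ_{>0}` as `p / q`. Its denominator has only finitely many roots,
so finitely many regular functions, and hence everything they generate, are also regular at
some point `c < 0`; but `1 / (x - c)` is not, since `p / q = 1 / (x - c)` on infinitely many
points forces `q = p (X - c)`. The same pole argument shows that no `1 / (x - c)` is a linear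
combination of the `1 / (x - d)` with `d ≠ c`.
-/

open Polynomial

variable {K : Type*} [Field K]

def ratFunRegularOn (P : K → Prop) (S : Set K) : Subalgebra K (Subtype P → K) where
  carrier := {f | ∃ p q : K[X], (∀ x : Subtype P, q.eval ↑x ≠ 0) ∧ (∀ x ∈ S, q.eval x ≠ 0) ∧
    ∀ x : Subtype P, f x = p.eval ↑x / q.eval ↑x}
  mul_mem' := by
    rintro f g ⟨p₁, q₁, hP₁, hS₁, hf₁⟩ ⟨p₂, q₂, hP₂, hS₂, hf₂⟩
    exact ⟨p₁ * p₂, q₁ * q₂, fun x => by simp [hP₁ x, hP₂ x],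
      fun x hx => by simp [hS₁ x hx, hS₂ x hx], fun x => by simp [hf₁ x, hf₂ x, div_mul_div_comm]⟩
  add_mem' := by
    rintro f g ⟨p₁, q₁, hP₁, hS₁, hf₁⟩ ⟨p₂, q₂, hP₂, hS₂, hf₂⟩
    exact ⟨p₁ * q₂ + q₁ * p₂, q₁ * q₂, fun x => by simp [hP₁ x, hP₂ x],
      fun x hx => by simp [hS₁ x hx, hS₂ x hx],
      fun x => by simp [hf₁ x, hf₂ x, div_add_div _ _ (hP₁ x) (hP₂ x)]⟩
  algebraMap_mem' r := ⟨C r, 1, by simp, by simp, by simp⟩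

variable {P : K → Prop} {S : Set K}

theorem coe_mem_ratFunRegularOn : (fun x : Subtype P => (x : K)) ∈ ratFunRegularOn P S :=
  ⟨X, 1, by simp, by simp, by simp⟩

theorem inv_sub_mem_ratFunRegularOn {c : K} (hcP : ¬ P c) (hcS : c ∉ S) :
    (fun x : Subtype P => ((x : K) - c)⁻¹) ∈ ratFunRegularOn P S :=
  ⟨1, X - C c, fun x => by simpa [sub_eq_zero] using fun h : (x : K) = c => hcP (h ▸ x.2),
    fun x hx => by simpa [sub_eq_zero] using ne_of_mem_of_not_mem hx hcS, by simp⟩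

theorem coe_ratFunRegularOn_empty :
    (ratFunRegularOn P ∅ : Set (Subtype P → K)) = {f | ∃ p q : K[X],
      (∀ x : Subtype P, q.eval ↑x ≠ 0) ∧ ∀ x : Subtype P, f x = p.eval ↑x / q.eval ↑x} := by
  ext f
  simp [ratFunRegularOn]

theorem inv_sub_notMem_ratFunRegularOn (hP : {x | P x}.Infinite) {c : K} (hcP : ¬ P c)
    (hcS : c ∈ S) :
    (fun x : Subtype P => ((x : K) - c)⁻¹) ∉ ratFunRegularOn P S := by
  rintro ⟨p, q, hqP, hqS, hf⟩
  have hq : q = p * (X - C c) := by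
    refine eq_of_infinite_eval_eq _ _ (hP.mono fun x hx => ?_)
    have hxc : x - c ≠ 0 := sub_ne_zero.2 fun h => hcP (h ▸ hx)
    have := hf ⟨x, hx⟩
    field_simp [hqP ⟨x, hx⟩] at this
    simp [this, mul_comm]
  exact hqS c hcS (by simp [hq])

theorem finite_setOf_notMem_ratFunRegularOn_insert (hP : {x | P x}.Nonempty)
    {f : Subtype P → K} (hf : f ∈ ratFunRegularOn P S) :
    {c | f ∉ ratFunRegularOn P (insert c S)}.Finite := by
  obtain ⟨p, q, hqP, hqS, hf⟩ := hf
  have hq : q ≠ 0 := fun h => hqP ⟨_, hP.some_mem⟩ (by simp [h])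
  refine (finite_setOfPred_isRoot hq).subset fun c hc => ?_
  by_contra hqc
  exact hc ⟨p, q, hqP, Set.forall_mem_insert.2 ⟨hqc, hqS⟩, hf⟩

theorem not_fg_ratFunRegularOn (hP : {x | P x}.Infinite) (hPc : {x | ¬ P x}.Infinite) :
    ¬ (ratFunRegularOn P ∅).FG := by
  rintro ⟨t, ht⟩
  have hbad : (⋃ g ∈ t, {c | g ∉ ratFunRegularOn P (insert c ∅)}).Finite :=
    t.finite_toSet.biUnion fun g hg =>
      finite_setOf_notMem_ratFunRegularOn_insert hP.nonempty (ht ▸ Algebra.subset_adjoin hg)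
  obtain ⟨c, hcP, hc⟩ := (hPc.sdiff hbad).nonempty
  have hle : ratFunRegularOn P ∅ ≤ ratFunRegularOn P (insert c ∅) := by
    refine ht ▸ Algebra.adjoin_le fun g hg => ?_
    by_contra h
    exact hc (Set.mem_biUnion hg h)
  exact inv_sub_notMem_ratFunRegularOn hP hcP (Set.mem_insert c ∅)
    (hle (inv_sub_mem_ratFunRegularOn hcP (Set.notMem_empty c)))

theorem linearIndependent_inv_sub {ι : Type*} {c : ι → K} (hP : {x | P x}.Infinite)
    (hc : Function.Injective c) (hcP : ∀ i, ¬ P (c i)) :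
    LinearIndependent K fun i => fun x : Subtype P => ((x : K) - c i)⁻¹ := by
  refine linearIndependent_iff_notMem_span.2 fun i hi => ?_
  have hle : Submodule.span K
      ((fun j => fun x : Subtype P => ((x : K) - c j)⁻¹) '' (Set.univ \ {i})) ≤
      Subalgebra.toSubmodule (ratFunRegularOn P {c i}) := by
    refine Submodule.span_le.2 ?_
    rintro _ ⟨j, hj, rfl⟩
    exact inv_sub_mem_ratFunRegularOn (hcP j) (hc.ne (by simpa using hj))
  exact inv_sub_notMem_ratFunRegularOn hP (hcP i) (Set.mem_singleton (c i)) (hle hi)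

/-- The ℝ-algebra of regular functions on the multiplicative group of positive reals
(rational functions `p/q` with `q` nonvanishing on `ℝ_{>0}`) is not a finitely generated
ℝ-algebra; the functions `x ↦ 1/(x+a)` for `a > 0` are linearly independent, and no finite
subset of them together with `x` generates them all over ℝ. -/
theorem positive_reals_not_affine_algebraic :
    (¬ (Algebra.adjoin ℝ
      {f : {x : ℝ // 0 < x} → ℝ | ∃ p q : Polynomial ℝ,
        (∀ x : {x : ℝ // 0 < x}, Polynomial.eval x.1 q ≠ 0) ∧
        ∀ x : {x : ℝ // 0 < x}, f x = Polynomial.eval x.1 p / Polynomial.eval x.1 q}).FG) ∧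
    LinearIndependent ℝ
      (fun a : {a : ℝ // 0 < a} => fun x : {x : ℝ // 0 < x} => (x.1 + a.1)⁻¹) ∧
    (∀ t : Finset {a : ℝ // 0 < a}, ∃ a : {a : ℝ // 0 < a},
      (fun x : {x : ℝ // 0 < x} => (x.1 + a.1)⁻¹) ∉
        Algebra.adjoin ℝ (insert (fun x : {x : ℝ // 0 < x} => x.1)
          {g : {x : ℝ // 0 < x} → ℝ | ∃ b ∈ t, g = fun x => (x.1 + b.1)⁻¹})) := by
  have hP : {x : ℝ | 0 < x}.Infinite := Set.Ioi_infinite 0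
  have hPc : {x : ℝ | ¬ 0 < x}.Infinite := by
    simp only [not_lt]
    exact Set.Iic_infinite 0
  have hneg : ∀ a : {a : ℝ // 0 < a}, ¬ 0 < -a.1 := fun a => by simpa using a.2.le
  simp only [← sub_neg_eq_add]
  refine ⟨?_, linearIndependent_inv_sub hP (neg_injective.comp Subtype.val_injective) hneg,
    fun t => ?_⟩
  · rw [← coe_ratFunRegularOn_empty, Algebra.adjoin_eq]
    exact not_fg_ratFunRegularOn hP hPc
  · obtain ⟨a, ha, hat⟩ := (hP.sdiff (t.image Subtype.val).finite_toSet).nonempty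
    refine ⟨⟨a, ha⟩, fun hmem => inv_sub_notMem_ratFunRegularOn hP (hneg ⟨a, ha⟩)
      (Set.mem_singleton _) (Algebra.adjoin_le ?_ hmem)⟩
    rintro _ (rfl | ⟨b, hb, rfl⟩)
    · exact coe_mem_ratFunRegularOn
    · exact inv_sub_mem_ratFunRegularOn (hneg b) fun hba =>
        hat (Finset.mem_coe.2 (Finset.mem_image.2 ⟨b, hb, neg_inj.1 hba⟩))
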